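/- arXiv:2601.06310 — 9 statements merged into one kernel-verified Lean document; each statement's English description precedes it below -/
import Mathlib

section
/- Let X and Y be compact Hausdorff spaces and f : Y → X a continuous, closed, irreducible surjection. Then f restricts to a bijection between the set of isolated points of Y and the set of isolated points of X. -/
theorem stmt_2 {X Y : Type*} [TopologicalSpace X] [TopologicalSpace Y]
    [CompactSpace X] [T2Space X] [CompactSpace Y] [T2Space Y]
    (f : Y → X) (hcont : Continuous f) (hclosed : IsClosedMap f)
    (hsurj : Function.Surjective f)
    (hirr : ∀ F : Set Y, IsClosed F → F ≠ Set.univ → f '' F ≠ Set.univ) :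
    Set.BijOn f {y : Y | IsOpen ({y} : Set Y)} {x : X | IsOpen ({x} : Set X)} := by
  -- key fact: for an isolated point y, the fiber of f y is {y}
  have key : ∀ y : Y, IsOpen ({y} : Set Y) → ∀ y' : Y, f y' = f y → y' = y := by
    intro y hy y' hfy
    by_contra hne
    have hFc : IsClosed ({y}ᶜ : Set Y) := hy.isClosed_compl
    have hneq : ({y}ᶜ : Set Y) ≠ Set.univ := by
      intro h
      have : y ∈ ({y}ᶜ : Set Y) := h ▸ Set.mem_univ y
      simp at this
    have h1 := hirr _ hFc hneq
    apply h1
    ext x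
    simp only [Set.mem_univ, iff_true]
    obtain ⟨z, hz⟩ := hsurj x
    by_cases hzy : z = y
    · exact ⟨y', by simpa using hne, by rw [hfy, ← hz, hzy]⟩
    · exact ⟨z, by simpa using hzy, hz⟩
  refine ⟨?_, ?_, ?_⟩
  · -- MapsTo
    intro y hy
    simp only [Set.mem_setOf_eq] at hy ⊢
    have himg : f '' ({y}ᶜ) = ({f y}ᶜ : Set X) := by
      ext x
      constructor
      · rintro ⟨y', hy', rfl⟩
        simp only [Set.mem_compl_iff, Set.mem_singleton_iff] at hy' ⊢
        exact fun h => hy' (key y hy y' h)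
      · intro hx
        obtain ⟨z, hz⟩ := hsurj x
        refine ⟨z, ?_, hz⟩
        simp only [Set.mem_compl_iff, Set.mem_singleton_iff] at hx ⊢
        intro h
        exact hx (by rw [← hz, h])
    have : IsClosed (({f y}ᶜ : Set X)) := himg ▸ hclosed _ hy.isClosed_compl
    exact isClosed_compl_iff.mp this
  · -- InjOn
    intro y1 h1 y2 h2 hfeq
    exact key y2 h2 y1 hfeq
  · -- SurjOn
    intro x hx
    simp only [Set.mem_setOf_eq] at hx
    obtain ⟨y, hy⟩ := hsurj x
    have hopen : IsOpen (f ⁻¹' {x}) := hx.preimage hcont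
    have hF : IsClosed ((f ⁻¹' {x})ᶜ ∪ {y}) :=
      hopen.isClosed_compl.union isClosed_singleton
    have hFu : (f ⁻¹' {x})ᶜ ∪ {y} = Set.univ := by
      by_contra hne
      apply hirr _ hF hne
      ext x'
      simp only [Set.mem_univ, iff_true]
      by_cases hx' : x' = x
      · exact ⟨y, Or.inr rfl, by rw [hy, hx']⟩
      · obtain ⟨z, hz⟩ := hsurj x'
        exact ⟨z, Or.inl (by simp [hz, hx']), hz⟩
    have hfib : f ⁻¹' {x} = {y} := by
      apply Set.eq_of_subset_of_subset
      · intro z hz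
        have : z ∈ (f ⁻¹' {x})ᶜ ∪ {y} := hFu ▸ Set.mem_univ z
        rcases this with h | h
        · exact absurd hz h
        · exact h
      · intro z hz
        simp only [Set.mem_singleton_iff] at hz
        simp [hz, hy]
    refine ⟨y, ?_, hy⟩
    simp only [Set.mem_setOf_eq]
    rw [← hfib]
    exact hopen
end

section
/- Let D be an infinite discrete space and αD its one-point compactification. If X is a compact Hausdorff space and τ : αD → X is a continuous, closed, irreducible surjection, then τ is a homeomorphism. -/
lemma stmt_3_aux {D : Type*} [TopologicalSpace D]
    {X : Type*} [TopologicalSpace X]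
    (τ : OnePoint D → X)
    (hsurj : Function.Surjective τ)
    (hirr : ∀ F : Set (OnePoint D), IsClosed F → F ≠ Set.univ → τ '' F ≠ Set.univ)
    (a b : OnePoint D) (hab : τ a = τ b) (hne : a ≠ b) (ho : IsOpen ({a} : Set (OnePoint D))) :
    False := by
  refine hirr {a}ᶜ (isClosed_compl_iff.mpr ho) ?_ ?_
  · intro h
    have : a ∈ ({a}ᶜ : Set (OnePoint D)) := h ▸ Set.mem_univ a
    exact this rfl
  · ext x
    simp only [Set.mem_univ, iff_true]
    obtain ⟨y, hy⟩ := hsurj x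
    by_cases h : y = a
    · exact ⟨b, fun hb => hne hb.symm, by rw [← hab, ← h]; exact hy⟩
    · exact ⟨y, h, hy⟩

theorem stmt_3 {D : Type*} [TopologicalSpace D] [DiscreteTopology D] [Infinite D]
    {X : Type*} [TopologicalSpace X] [CompactSpace X] [T2Space X]
    (τ : OnePoint D → X) (hcont : Continuous τ) (hclosed : IsClosedMap τ)
    (hsurj : Function.Surjective τ)
    (hirr : ∀ F : Set (OnePoint D), IsClosed F → F ≠ Set.univ → τ '' F ≠ Set.univ) :
    IsHomeomorph τ := by
  rw [isHomeomorph_iff_continuous_isClosedMap_bijective]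
  refine ⟨hcont, hclosed, ?_, hsurj⟩
  intro a b hab
  by_contra hne
  have hopen : ∀ d : D, IsOpen ({(d : OnePoint D)} : Set (OnePoint D)) := fun d => by
    have := OnePoint.isOpenEmbedding_coe (X := D) |>.isOpenMap {d} (isOpen_discrete _)
    simpa [Set.image_singleton] using this
  cases a using OnePoint.rec with
  | infty =>
    cases b using OnePoint.rec with
    | infty => exact hne rfl
    | coe d => exact stmt_3_aux τ hsurj hirr _ _ hab.symm (Ne.symm hne) (hopen d)
  | coe d => exact stmt_3_aux τ hsurj hirr _ _ hab hne (hopen d)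
end

section
/- Let K be an infinite compact Hausdorff space whose set of isolated points is not dense. Then for every compact Hausdorff space Z and continuous irreducible surjection f : K → Z, there exist a compact Hausdorff space Z' and continuous irreducible surjections g : Z → Z' and h : K → Z' with h = g ∘ f, such that g is not injective. -/
/-!
Let `U` be the (nonempty) interior of the set of non-isolated points of `K`. Irreducibility makes
`W = Z \ f(K \ U)` a nonempty open set, and a point of `W` isolated in `Z` would have an open fibre
inside `U` which, again by irreducibility, is a single point, hence isolated in `K`. So `Z` has
two distinct non-isolated points `a`, `b`. Collapsing `{a, b}` to a point gives a compact
Hausdorff quotient `Z'`, and the quotient map is irreducible because `{a, b}` has empty interior.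
-/

open Set Function

/-- Only the defining property: continuity and surjectivity are kept as separate hypotheses. -/
def IsIrreducibleMap {X Y : Type*} [TopologicalSpace X] (f : X → Y) : Prop :=
  ∀ F : Set X, IsClosed F → F ≠ univ → f '' F ≠ univ

theorem Function.Injective.isIrreducibleMap {X Y : Type*} [TopologicalSpace X] {f : X → Y}
    (hf : Injective f) : IsIrreducibleMap f := by
  intro F _ hF hfF
  obtain ⟨x, hx⟩ := (ne_univ_iff_exists_notMem F).1 hF
  obtain ⟨y, hy, hxy⟩ := hfF.symm ▸ mem_univ (f x)
  exact hx (hf hxy ▸ hy)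

namespace IsIrreducibleMap

variable {X Y Z : Type*} [TopologicalSpace X] [TopologicalSpace Y] {f : X → Y}

theorem comp {g : Y → Z} (hg : IsIrreducibleMap g) (hf : IsIrreducibleMap f)
    (hf' : IsClosedMap f) : IsIrreducibleMap (g ∘ f) := by
  intro F hF hF'
  rw [image_comp]
  exact hg _ (hf' F hF) (hf F hF hF')

theorem isOpen_singleton_of_isOpen_singleton_image [T1Space X] (hf : IsIrreducibleMap f)
    (hcont : Continuous f) (hsurj : Surjective f) {x : X} (hx : IsOpen {f x}) :
    IsOpen ({x} : Set X) := by
  have hfib : IsOpen (f ⁻¹' {f x}) := hx.preimage hcont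
  have hcover : {x} ∪ (f ⁻¹' {f x})ᶜ = univ := by
    by_contra hne
    refine hf _ (isClosed_singleton.union hfib.isClosed_compl) hne (eq_univ_of_forall fun z => ?_)
    obtain ⟨w, rfl⟩ := hsurj z
    by_cases hw : f w = f x
    · exact ⟨x, Or.inl rfl, hw.symm⟩
    · exact ⟨w, Or.inr hw, rfl⟩
  have hfib_eq : f ⁻¹' {f x} = {x} := by
    refine Subset.antisymm (fun y hy => ?_) (singleton_subset_iff.2 rfl)
    rcases hcover ▸ mem_univ y with hyx | hy'
    · exact hyx
    · exact absurd hy hy'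
  rwa [hfib_eq] at hfib

theorem dense_preimage (hf : IsIrreducibleMap f) (hcl : IsClosedMap f) (hsurj : Surjective f)
    {D : Set Y} (hD : Dense D) : Dense (f ⁻¹' D) := by
  by_contra hnd
  set U := interior (f ⁻¹' D)ᶜ
  have hUc : IsClosed Uᶜ := isOpen_interior.isClosed_compl
  have hU : U.Nonempty := by
    rwa [nonempty_iff_ne_empty, Ne, interior_eq_empty_iff_dense_compl, compl_compl]
  have hW : IsOpen (f '' Uᶜ)ᶜ := (hcl _ hUc).isOpen_compl
  have hWne : (f '' Uᶜ)ᶜ.Nonempty := nonempty_compl.2 (hf _ hUc (compl_ne_univ.2 hU))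
  obtain ⟨z, hzW, hzD⟩ := hD.inter_open_nonempty _ hW hWne
  obtain ⟨x, rfl⟩ := hsurj z
  have hxU : x ∈ U := not_not.1 fun hx => hzW ⟨x, hx, rfl⟩
  exact interior_subset hxU hzD

theorem dense_setOf_isOpen_singleton [T1Space X] (hf : IsIrreducibleMap f) (hcont : Continuous f)
    (hcl : IsClosedMap f) (hsurj : Surjective f) (hY : Dense {y : Y | IsOpen {y}}) :
    Dense {x : X | IsOpen {x}} :=
  (hf.dense_preimage hcl hsurj hY).mono fun _ hx =>
    hf.isOpen_singleton_of_isOpen_singleton_image hcont hsurj hx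

end IsIrreducibleMap

section NonIsolated

variable {X : Type*} [TopologicalSpace X]

theorem nontrivial_setOf_not_isOpen_singleton (h : ¬Dense {x : X | IsOpen {x}}) :
    {x : X | ¬IsOpen {x}}.Nontrivial := by
  rw [← compl_compl {x : X | IsOpen {x}}, ← interior_eq_empty_iff_dense_compl, compl_ofPred] at h
  obtain ⟨a, ha⟩ := nonempty_iff_ne_empty.2 h
  refine Nontrivial.mono (not_subsingleton_iff.1 fun hs => ?_) interior_subset
  have : IsOpen ({a} : Set X) := hs.eq_singleton_of_mem ha ▸ isOpen_interior
  exact interior_subset ha this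

theorem Set.Finite.interior_eq_empty_of_not_isOpen_singleton [T1Space X] {s : Set X}
    (hs : s.Finite) (h : ∀ x ∈ s, ¬IsOpen {x}) : interior s = ∅ :=
  eq_empty_of_forall_notMem fun x hx =>
    h x (interior_subset hx)
      (isOpen_singleton_of_finite_mem_nhds x (mem_interior_iff_mem_nhds.1 hx) hs)

end NonIsolated

section Collapse

variable {X : Type*}

def collapseSetoid (A : Set X) : Setoid X where
  r x y := x = y ∨ (x ∈ A ∧ y ∈ A)
  iseqv := by
    refine ⟨fun x => Or.inl rfl, ?_, ?_⟩
    · rintro x y (rfl | ⟨hx, hy⟩)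
      exacts [Or.inl rfl, Or.inr ⟨hy, hx⟩]
    · rintro x y z (rfl | ⟨hx, hy⟩) (rfl | ⟨hy', hz⟩)
      exacts [Or.inl rfl, Or.inr ⟨hy', hz⟩, Or.inr ⟨hx, hy⟩, Or.inr ⟨hx, hz⟩]

variable {A : Set X}

theorem preimage_image_mk_collapseSetoid {U : Set X} (hU : A ⊆ U ∨ Disjoint U A) :
    Quotient.mk (collapseSetoid A) ⁻¹' (Quotient.mk (collapseSetoid A) '' U) = U := by
  refine Subset.antisymm (fun x ⟨y, hy, hyx⟩ => ?_) (subset_preimage_image _ _)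
  rcases Quotient.exact hyx with rfl | ⟨hyA, hxA⟩
  · exact hy
  · rcases hU with hAU | hUA
    · exact hAU hxA
    · exact absurd hyA (hUA.notMem_of_mem_left hy)

variable [TopologicalSpace X]

theorem isOpen_image_mk_collapseSetoid {U : Set X} (hU : IsOpen U) (hUA : A ⊆ U ∨ Disjoint U A) :
    IsOpen (Quotient.mk (collapseSetoid A) '' U) :=
  isOpen_coinduced.2 ((preimage_image_mk_collapseSetoid hUA).symm ▸ hU)

theorem t2Space_quotient_collapseSetoid [T1Space X] [NormalSpace X] (hA : IsClosed A) :
    T2Space (Quotient (collapseSetoid A)) := by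
  -- `x` and `A` together are separated from `y ∉ A` by open sets that are both saturated.
  have key : ∀ x y : X, y ∉ A → x ≠ y → ∃ U V : Set (Quotient (collapseSetoid A)),
      IsOpen U ∧ IsOpen V ∧ ⟦x⟧ ∈ U ∧ ⟦y⟧ ∈ V ∧ Disjoint U V := by
    intro x y hy hxy
    obtain ⟨U, V, hU, hV, hxAU, hyV, hUV⟩ := NormalSpace.normal ({x} ∪ A) {y}
      (isClosed_singleton.union hA) isClosed_singleton (by simp [hxy.symm, hy])
    have hAU : A ⊆ U := subset_union_right.trans hxAU
    have hVA : Disjoint V A := hUV.symm.mono_right hAU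
    refine ⟨_, _, isOpen_image_mk_collapseSetoid hU (Or.inl hAU),
      isOpen_image_mk_collapseSetoid hV (Or.inr hVA), mem_image_of_mem _ (hxAU (Or.inl rfl)),
      mem_image_of_mem _ (hyV rfl), ?_⟩
    rw [disjoint_image_left, preimage_image_mk_collapseSetoid (Or.inr hVA)]
    exact hUV
  refine ⟨fun p q hpq => ?_⟩
  induction p using Quotient.inductionOn with | h x => ?_
  induction q using Quotient.inductionOn with | h y => ?_
  have hxy : x ≠ y := fun h => hpq (h ▸ rfl)
  by_cases hy : y ∈ A
  · have hx : x ∉ A := fun hx => hpq (Quotient.sound (Or.inr ⟨hx, hy⟩))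
    obtain ⟨U, V, hU, hV, hyU, hxV, hUV⟩ := key y x hx hxy.symm
    exact ⟨V, U, hV, hU, hxV, hyU, hUV.symm⟩
  · exact key x y hy hxy

theorem isIrreducibleMap_mk_collapseSetoid (hA : interior A = ∅) :
    IsIrreducibleMap (Quotient.mk (collapseSetoid A)) := by
  intro F hF hFne hFim
  obtain ⟨c, hc⟩ := (ne_univ_iff_exists_notMem F).1 hFne
  have hFA : Fᶜ ⊆ A := fun x hx => by
    obtain ⟨y, hyF, hyx⟩ := hFim.symm ▸ mem_univ (Quotient.mk (collapseSetoid A) x)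
    rcases Quotient.exact hyx with rfl | ⟨_, hxA⟩
    exacts [absurd hyF hx, hxA]
  exact (hA ▸ interior_maximal hFA hF.isOpen_compl hc : c ∈ (∅ : Set X))

end Collapse

theorem stmt_4_general {K : Type u} [TopologicalSpace K] [CompactSpace K] [T2Space K]
    (hK : ¬ Dense {x : K | IsOpen ({x} : Set K)})
    {Z : Type v} [TopologicalSpace Z] [CompactSpace Z] [T2Space Z]
    (f : K → Z) (hcont : Continuous f) (hsurj : Function.Surjective f)
    (hirr : ∀ F : Set K, IsClosed F → F ≠ Set.univ → f '' F ≠ Set.univ) :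
    ∃ (Z' : Type (max u v)) (_ : TopologicalSpace Z'),
      CompactSpace Z' ∧ T2Space Z' ∧
      ∃ (g : Z → Z') (h : K → Z'),
        Continuous g ∧ Function.Surjective g ∧
          (∀ F : Set Z, IsClosed F → F ≠ Set.univ → g '' F ≠ Set.univ) ∧
        Continuous h ∧ Function.Surjective h ∧
          (∀ F : Set K, IsClosed F → F ≠ Set.univ → h '' F ≠ Set.univ) ∧
        h = g ∘ f ∧ ¬ Function.Injective g := by
  have hf : IsIrreducibleMap f := hirr
  obtain ⟨a, ha, b, hb, hab⟩ := nontrivial_setOf_not_isOpen_singleton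
    (mt (hf.dense_setOf_isOpen_singleton hcont hcont.isClosedMap hsurj) hK)
  have hA : interior ({a, b} : Set Z) = ∅ :=
    (toFinite _).interior_eq_empty_of_not_isOpen_singleton (by rintro _ (rfl | rfl) <;> assumption)
  have := t2Space_quotient_collapseSetoid (toFinite ({a, b} : Set Z)).isClosed
  let g : Z → ULift.{u} (Quotient (collapseSetoid ({a, b} : Set Z))) := ULift.up ∘ Quotient.mk _
  have hgcont : Continuous g := continuous_uliftUp.comp continuous_quotient_mk'
  have hgsurj : Surjective g := ULift.up_surjective.comp Quotient.mk_surjective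
  have hg : IsIrreducibleMap g := ULift.up_injective.isIrreducibleMap.comp
    (isIrreducibleMap_mk_collapseSetoid hA) continuous_quotient_mk'.isClosedMap
  refine ⟨_, inferInstance, inferInstance, inferInstance, g, g ∘ f, hgcont, hgsurj, hg,
    hgcont.comp hcont, hgsurj.comp hsurj, hg.comp hf hcont.isClosedMap, rfl, fun hinj => hab ?_⟩
  exact hinj (congrArg ULift.up (Quotient.sound (Or.inr ⟨Or.inl rfl, Or.inr rfl⟩)))

theorem stmt_4 {K : Type u} [TopologicalSpace K] [CompactSpace K] [T2Space K]
    [Infinite K] (hK : ¬ Dense {x : K | IsOpen ({x} : Set K)})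
    {Z : Type v} [TopologicalSpace Z] [CompactSpace Z] [T2Space Z]
    (f : K → Z) (hcont : Continuous f) (hsurj : Function.Surjective f)
    (hirr : ∀ F : Set K, IsClosed F → F ≠ Set.univ → f '' F ≠ Set.univ) :
    ∃ (Z' : Type (max u v)) (_ : TopologicalSpace Z'),
      CompactSpace Z' ∧ T2Space Z' ∧
      ∃ (g : Z → Z') (h : K → Z'),
        Continuous g ∧ Function.Surjective g ∧
          (∀ F : Set Z, IsClosed F → F ≠ Set.univ → g '' F ≠ Set.univ) ∧
        Continuous h ∧ Function.Surjective h ∧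
          (∀ F : Set K, IsClosed F → F ≠ Set.univ → h '' F ≠ Set.univ) ∧
        h = g ∘ f ∧ ¬ Function.Injective g :=
  stmt_4_general hK f hcont hsurj hirr
end

section
/- Let K be a compact Hausdorff space, A ⊆ C(K;ℝ) a vector sublattice containing the constant function 1 and separating the points of K. If K is zero-dimensional, then for every clopen set U ⊆ K, the characteristic function χ(U) belongs to A; consequently F(K) ⊆ A. -/
/-!
By the lattice form of the Stone–Weierstrass theorem, `A` is dense in `C(K, ℝ)`. The
characteristic function `χ` of a clopen set `U` is continuous, so some `f ∈ A` is uniformly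
within `1/3` of it; then `3f - 1` is `≥ 1` on `U` and `≤ 0` off `U`, and truncating it between
`0` and `1` recovers `χ`. A continuous function `f` with finite range is the finite combination
`∑ c • χ(f⁻¹{c})` of characteristic functions of its fibres, which are clopen.
-/

section

open ContinuousMap LocallyConstant

variable {X : Type*} [TopologicalSpace X]

theorem Submodule.const_mem_of_one_mem {S : Submodule ℝ C(X, ℝ)} (hone : 1 ∈ S) (c : ℝ) :
    ContinuousMap.const X c ∈ S := by
  convert S.smul_mem c hone
  ext; simp

theorem Submodule.separatesPointsStrongly_of_one_mem {S : Submodule ℝ C(X, ℝ)} (hone : 1 ∈ S)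
    (hsep : ∀ x y : X, x ≠ y → ∃ f ∈ S, f x ≠ f y) :
    (S : Set C(X, ℝ)).SeparatesPointsStrongly := by
  intro v x y
  by_cases hxy : x = y
  · subst hxy
    exact ⟨_, S.const_mem_of_one_mem hone (v x), rfl, rfl⟩
  obtain ⟨f, hfS, hf⟩ := hsep x y hxy
  have hf' : f x - f y ≠ 0 := sub_ne_zero.2 hf
  refine ⟨((v x - v y) / (f x - f y)) • (f - .const X (f y)) + .const X (v y),
    S.add_mem (S.smul_mem _ (S.sub_mem hfS (S.const_mem_of_one_mem hone _)))
      (S.const_mem_of_one_mem hone _), ?_, ?_⟩ <;> simp [div_mul_cancel₀ _ hf']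

theorem LocallyConstant.charFn_eq_inf_sup {U : Set X} (hU : IsClopen U) {f : C(X, ℝ)}
    (hfU : ∀ x ∈ U, 1 ≤ f x) (hfUc : ∀ x ∉ U, f x ≤ 0) :
    (charFn ℝ hU : C(X, ℝ)) = f ⊓ 1 ⊔ 0 := by
  ext x
  by_cases hx : x ∈ U
  · simp [coe_charFn, hx, hfU x hx]
  · simp [coe_charFn, hx, hfUc x hx]

theorem Submodule.charFn_mem [CompactSpace X] {S : Submodule ℝ C(X, ℝ)} (hone : 1 ∈ S)
    (hsup : ∀ f ∈ S, ∀ g ∈ S, f ⊔ g ∈ S) (hinf : ∀ f ∈ S, ∀ g ∈ S, f ⊓ g ∈ S)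
    (hsep : ∀ x y : X, x ≠ y → ∃ f ∈ S, f x ≠ f y) {U : Set X} (hU : IsClopen U) :
    (charFn ℝ hU : C(X, ℝ)) ∈ S := by
  have hdense : closure (S : Set C(X, ℝ)) = ⊤ :=
    sublattice_closure_eq_top _ ⟨1, hone⟩ hinf hsup
      (S.separatesPointsStrongly_of_one_mem hone hsep)
  have hmem : (charFn ℝ hU : C(X, ℝ)) ∈ closure (S : Set C(X, ℝ)) := by
    rw [hdense]; trivial
  obtain ⟨f, hfS, hf⟩ := Metric.mem_closure_iff.1 hmem (1 / 3) (by norm_num)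
  have hclose (x : X) : |charFn ℝ hU x - f x| < 1 / 3 := by
    rw [← Real.dist_eq]
    exact (dist_apply_le_dist (f := (charFn ℝ hU : C(X, ℝ))) (g := f) x).trans_lt hf
  rw [charFn_eq_inf_sup hU (f := (3 : ℝ) • f - 1)]
  · exact hsup _ (hinf _ (S.sub_mem (S.smul_mem _ hfS) hone) _ hone) _ S.zero_mem
  all_goals
    intro x hx
    have := hclose x
    simp [coe_charFn, hx, abs_lt] at this ⊢
    linarith

theorem ContinuousMap.isClopen_preimage_singleton_of_finite_range {Y : Type*}
    [TopologicalSpace Y] [T1Space Y] (f : C(X, Y)) (hf : (Set.range f).Finite) (c : Y) :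
    IsClopen (f ⁻¹' {c}) := by
  refine ⟨isClosed_singleton.preimage f.continuous, ?_⟩
  have : (f ⁻¹' {c})ᶜ = f ⁻¹' (Set.range f \ {c}) := by ext; simp
  rw [← isClosed_compl_iff, this]
  exact (hf.subset Set.sdiff_subset).isClosed.preimage f.continuous

theorem ContinuousMap.eq_sum_smul_charFn_of_finite_range (f : C(X, ℝ))
    (hf : (Set.range f).Finite) :
    f = ∑ c ∈ hf.toFinset,
      c • (charFn ℝ (f.isClopen_preimage_singleton_of_finite_range hf c) : C(X, ℝ)) := by
  ext x
  rw [ContinuousMap.sum_apply, Finset.sum_eq_single (f x)]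
  · simp [coe_charFn]
  · intro c _ hc
    simp [coe_charFn, Ne.symm hc]
  · simp

end

open Classical in
theorem stmt_10_general {K : Type*} [TopologicalSpace K] [CompactSpace K]
    (A : Set C(K, ℝ))
    (hadd : ∀ f ∈ A, ∀ g ∈ A, f + g ∈ A)
    (hsmul : ∀ (c : ℝ), ∀ f ∈ A, c • f ∈ A)
    (hsup : ∀ f ∈ A, ∀ g ∈ A, f ⊔ g ∈ A)
    (hinf : ∀ f ∈ A, ∀ g ∈ A, f ⊓ g ∈ A)
    (hone : ContinuousMap.const K 1 ∈ A)
    (hsep : ∀ x y : K, x ≠ y → ∃ f ∈ A, f x ≠ f y) :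
    (∀ U : Set K, IsClopen U →
      ∃ f ∈ A, ∀ x : K, f x = if x ∈ U then (1 : ℝ) else 0) ∧
    (∀ f : C(K, ℝ), (Set.range f).Finite → f ∈ A) := by
  let S : Submodule ℝ C(K, ℝ) :=
    { carrier := A
      add_mem' := fun hf hg => hadd _ hf _ hg
      zero_mem' := by simpa using hsmul 0 _ hone
      smul_mem' := fun c _ hf => hsmul c _ hf }
  have hcharFn {U : Set K} (hU : IsClopen U) : (LocallyConstant.charFn ℝ hU : C(K, ℝ)) ∈ A :=
    S.charFn_mem hone hsup hinf hsep hU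
  refine ⟨fun U hU => ⟨_, hcharFn hU, fun x => ?_⟩, fun f hf => ?_⟩
  · simp [LocallyConstant.coe_charFn, Set.indicator_apply]
  rw [f.eq_sum_smul_charFn_of_finite_range hf]
  exact S.sum_mem fun c _ => S.smul_mem c (hcharFn _)

open Classical in
theorem stmt_10 {K : Type*} [TopologicalSpace K] [CompactSpace K] [T2Space K]
    (hbasis : TopologicalSpace.IsTopologicalBasis {U : Set K | IsClopen U})
    (A : Set C(K, ℝ))
    (hadd : ∀ f ∈ A, ∀ g ∈ A, f + g ∈ A)
    (hsmul : ∀ (c : ℝ), ∀ f ∈ A, c • f ∈ A)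
    (hsup : ∀ f ∈ A, ∀ g ∈ A, f ⊔ g ∈ A)
    (hinf : ∀ f ∈ A, ∀ g ∈ A, f ⊓ g ∈ A)
    (hone : ContinuousMap.const K 1 ∈ A)
    (hsep : ∀ x y : K, x ≠ y → ∃ f ∈ A, f x ≠ f y) :
    (∀ U : Set K, IsClopen U →
      ∃ f ∈ A, ∀ x : K, f x = if x ∈ U then (1 : ℝ) else 0) ∧
    (∀ f : C(K, ℝ), (Set.range f).Finite → f ∈ A) :=
  stmt_10_general A hadd hsmul hsup hinf hone hsep
end

section
/- Let K be a compact Hausdorff space and A ⊆ C(K;ℝ) a vector sublattice containing constants and separating points of K. Then A = F(K) if and only if for every p ∈ K, every element of A is locally constant at p. -/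
/-!
If every member of `A` is locally constant, compactness gives each of them finite range. Conversely,
lattice Stone–Weierstrass makes `A` dense, and a `1/3`-approximation `g ∈ A` of the indicator of
a clopen set is turned back into that indicator by the lattice operation `(3g - 1) ⊔ 0 ⊓ 1`;
finite-range continuous functions are linear combinations of such indicators. The forward
direction is the fact that a continuous map with finite range into a T₁ space is locally constant.
-/

open Set Topology

section LocallyConstant

variable {X : Type*} [TopologicalSpace X]

theorem isLocallyConstant_iff_forall_exists_nhds {Y : Type*} (f : X → Y) :
    IsLocallyConstant f ↔ ∀ p, ∃ U ∈ 𝓝 p, ∀ x ∈ U, f x = f p := by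
  simp only [IsLocallyConstant.iff_eventually_eq, Filter.eventually_iff_exists_mem]

theorem IsLocallyConstant.of_continuous_of_finite_range {Y : Type*} [TopologicalSpace Y]
    [T1Space Y] {f : X → Y} (hf : Continuous f) (hrange : (range f).Finite) :
    IsLocallyConstant f := by
  have : DiscreteTopology (range f) := hrange.isDiscrete.to_subtype
  exact ((IsLocallyConstant.iff_continuous _).2 hf.rangeFactorization).comp Subtype.val

theorem ContinuousMap.mem_span_clopen_indicators {R : Type*} [Semiring R] [TopologicalSpace R]
    [IsTopologicalSemiring R] (f : C(X, R)) (hf : IsLocallyConstant f) (hrange : (range f).Finite) :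
    f ∈ Submodule.span R {g : C(X, R) | ∃ U, IsClopen U ∧ ⇑g = U.indicator 1} := by
  have hclopen (y : R) : IsClopen (f ⁻¹' {y}) := hf.isClopen_fiber y
  have hfiber (y : R) : ∃ g : C(X, R), ⇑g = (f ⁻¹' {y}).indicator 1 :=
    ⟨LocallyConstant.charFn R (hclopen y), LocallyConstant.coe_charFn R (hclopen y)⟩
  choose χ hχ using hfiber
  have hsum : f = ∑ y ∈ hrange.toFinset, y • χ y := by
    ext x
    rw [ContinuousMap.coe_sum, Finset.sum_apply, Finset.sum_eq_single (f x)]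
    · simp [hχ]
    · intro y _ hy
      simp [hχ, Ne.symm hy]
    · simp
  rw [hsum]
  exact Submodule.sum_mem _ fun y _ =>
    Submodule.smul_mem _ y (Submodule.subset_span ⟨_, hclopen y, hχ y⟩)

end LocallyConstant

theorem Submodule.separatesPointsStrongly {X 𝕜 : Type*} [TopologicalSpace X] [Field 𝕜]
    [TopologicalSpace 𝕜] [IsTopologicalRing 𝕜] (S : Submodule 𝕜 C(X, 𝕜))
    (hconst : ∀ c : 𝕜, ContinuousMap.const X c ∈ S)
    (hsep : ∀ x y : X, x ≠ y → ∃ f ∈ S, f x ≠ f y) :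
    (S : Set C(X, 𝕜)).SeparatesPointsStrongly := by
  intro v x y
  obtain rfl | hxy := eq_or_ne x y
  · exact ⟨_, hconst (v x), rfl, rfl⟩
  obtain ⟨f, hf, hfxy⟩ := hsep x y hxy
  have hne : f x - f y ≠ 0 := sub_ne_zero_of_ne hfxy
  let c := (v x - v y) / (f x - f y)
  refine ⟨c • (f - .const X (f y)) + .const X (v y),
    S.add_mem (S.smul_mem c (S.sub_mem hf (hconst _))) (hconst _), ?_, ?_⟩
  · simp [c, div_mul_cancel₀ _ hne]
  · simp

theorem clamp_eq_of_abs_sub_lt {b t : ℝ} (hb : b = 0 ∨ b = 1) (ht : |b - t| < 1 / 3) :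
    min (max (3 * t - 1) 0) 1 = b := by
  rw [abs_lt] at ht
  rcases hb with rfl | rfl
  · rw [max_eq_right (by linarith), min_eq_left zero_le_one]
  · rw [max_eq_left (by linarith), min_eq_right (by linarith)]

theorem Submodule.mem_of_mem_closure_of_zero_one {K : Type*} [TopologicalSpace K] [CompactSpace K]
    (S : Submodule ℝ C(K, ℝ)) (hconst : ∀ c : ℝ, ContinuousMap.const K c ∈ S)
    (hsup : ∀ f ∈ S, ∀ g ∈ S, f ⊔ g ∈ S) (hinf : ∀ f ∈ S, ∀ g ∈ S, f ⊓ g ∈ S)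
    {χ : C(K, ℝ)} (hχ : ∀ x, χ x = 0 ∨ χ x = 1) (hmem : χ ∈ closure (S : Set C(K, ℝ))) :
    χ ∈ S := by
  obtain ⟨g, hg, hdist⟩ := Metric.mem_closure_iff.mp hmem (1 / 3) (by norm_num)
  have hclamp : (((3 : ℝ) • g - .const K 1) ⊔ .const K 0) ⊓ .const K 1 = χ := by
    ext x
    have hx : |χ x - g x| < 1 / 3 := (ContinuousMap.dist_apply_le_dist x).trans_lt hdist
    simpa using clamp_eq_of_abs_sub_lt (hχ x) hx
  rw [← hclamp]
  exact hinf _ (hsup _ (S.sub_mem (S.smul_mem 3 hg) (hconst 1)) _ (hconst 0)) _ (hconst 1)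

theorem stmt_13_general {K : Type*} [TopologicalSpace K] [CompactSpace K]
    (A : Set C(K, ℝ))
    (hadd : ∀ f ∈ A, ∀ g ∈ A, f + g ∈ A)
    (hsmul : ∀ (c : ℝ), ∀ f ∈ A, c • f ∈ A)
    (hsup : ∀ f ∈ A, ∀ g ∈ A, f ⊔ g ∈ A)
    (hinf : ∀ f ∈ A, ∀ g ∈ A, f ⊓ g ∈ A)
    (hconst : ∀ c : ℝ, ContinuousMap.const K c ∈ A)
    (hsep : ∀ x y : K, x ≠ y → ∃ f ∈ A, f x ≠ f y) :
    A = {f : C(K, ℝ) | (Set.range f).Finite} ↔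
      ∀ p : K, ∀ a ∈ A, ∃ U ∈ nhds p, ∀ x ∈ U, a x = a p := by
  let S : Submodule ℝ C(K, ℝ) :=
    { carrier := A
      add_mem' := fun ha hb => hadd _ ha _ hb
      zero_mem' := hconst 0
      smul_mem' := hsmul }
  have hdense : closure A = univ := ContinuousMap.sublattice_closure_eq_top A ⟨_, hconst 0⟩ hinf
    hsup (S.separatesPointsStrongly hconst hsep)
  have hindicator_mem : ∀ (g : C(K, ℝ)) (U : Set K), ⇑g = U.indicator 1 → g ∈ S := by
    intro g U hg
    refine S.mem_of_mem_closure_of_zero_one hconst hsup hinf (fun x => ?_) (hdense ▸ mem_univ g)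
    rw [hg]
    by_cases hx : x ∈ U <;> simp [hx]
  have hloc_iff : (∀ p : K, ∀ a ∈ A, ∃ U ∈ nhds p, ∀ x ∈ U, a x = a p) ↔
      ∀ a ∈ A, IsLocallyConstant a := by
    simp only [isLocallyConstant_iff_forall_exists_nhds]
    exact ⟨fun h a ha p => h p a ha, fun h p a ha => h a ha p⟩
  rw [hloc_iff]
  constructor
  · rintro hA a ha
    rw [hA] at ha
    exact .of_continuous_of_finite_range a.continuous ha
  · refine fun hloc => Subset.antisymm (fun a ha => (hloc a ha).range_finite) fun f hf => ?_
    have hspan : Submodule.span ℝ {g : C(K, ℝ) | ∃ U, IsClopen U ∧ ⇑g = U.indicator 1} ≤ S :=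
      Submodule.span_le.2 fun g ⟨U, _, hg⟩ => hindicator_mem g U hg
    exact hspan (f.mem_span_clopen_indicators (.of_continuous_of_finite_range f.continuous hf) hf)

theorem stmt_13 {K : Type*} [TopologicalSpace K] [CompactSpace K] [T2Space K]
    (A : Set C(K, ℝ))
    (hadd : ∀ f ∈ A, ∀ g ∈ A, f + g ∈ A)
    (hsmul : ∀ (c : ℝ), ∀ f ∈ A, c • f ∈ A)
    (hsup : ∀ f ∈ A, ∀ g ∈ A, f ⊔ g ∈ A)
    (hinf : ∀ f ∈ A, ∀ g ∈ A, f ⊓ g ∈ A)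
    (hconst : ∀ c : ℝ, ContinuousMap.const K c ∈ A)
    (hsep : ∀ x y : K, x ≠ y → ∃ f ∈ A, f x ≠ f y) :
    A = {f : C(K, ℝ) | (Set.range f).Finite} ↔
      ∀ p : K, ∀ a ∈ A, ∃ U ∈ nhds p, ∀ x ∈ U, a x = a p :=
  stmt_13_general A hadd hsmul hsup hinf hconst hsep
end

section
/- Let K be a compact Hausdorff space, p ∈ K, and A ⊆ C(K;ℝ) a vector sublattice that contains constants and separates the points of K. Then lc(A,p), the set of elements of A locally constant at p, still separates the points of K. -/
/-- Auxiliary: if `g ∈ A`, `g p = 0`, `g x ≠ g y` and `max (g x) (g y) > 0`,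
then truncating below by a suitable constant gives an element of `A`
locally constant at `p` that separates `x` and `y`. -/
lemma stmt_14_aux {K : Type*} [TopologicalSpace K]
    (p x y : K) (A : Set C(K, ℝ))
    (hsup : ∀ f ∈ A, ∀ g ∈ A, f ⊔ g ∈ A)
    (hconst : ∀ c : ℝ, ContinuousMap.const K c ∈ A)
    (g : C(K, ℝ)) (hg : g ∈ A) (hgp : g p = 0) (hne : g x ≠ g y)
    (hpos : 0 < max (g x) (g y)) :
    ∃ a ∈ A, (∃ U ∈ nhds p, ∀ z ∈ U, a z = a p) ∧ a x ≠ a y := by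
  set M : ℝ := max (g x) (g y) with hM
  set m : ℝ := max (min (g x) (g y)) 0 with hm
  have hminmax : min (g x) (g y) < M := min_lt_max.mpr hne
  have hmM : m < M := max_lt hminmax hpos
  set c : ℝ := (M + m) / 2 with hc
  have hcm : m < c := by rw [hc]; linarith
  have hcM : c < M := by rw [hc]; linarith
  have hc0 : 0 < c := lt_of_le_of_lt (le_max_right _ _) hcm
  refine ⟨g ⊔ ContinuousMap.const K c, hsup g hg _ (hconst c), ?_, ?_⟩
  · refine ⟨g ⁻¹' Set.Iio c, ?_, ?_⟩
    · exact (IsOpen.preimage g.continuous isOpen_Iio).mem_nhds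
        (by simp [Set.mem_preimage, hgp, hc0])
    · intro z hz
      simp only [Set.mem_preimage, Set.mem_Iio] at hz
      simp only [ContinuousMap.sup_apply, ContinuousMap.const_apply]
      rw [max_eq_right hz.le, hgp, max_eq_right hc0.le]
  · simp only [ContinuousMap.sup_apply, ContinuousMap.const_apply]
    rcases hne.lt_or_gt with h | h
    · have hMy : M = g y := max_eq_right h.le
      have hx : g x ≤ m := le_trans (le_min le_rfl h.le) (le_max_left _ _)
      rw [max_eq_right (hx.trans hcm.le), max_eq_left (hMy ▸ hcM).le]
      exact ne_of_lt (hMy ▸ hcM)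
    · have hMx : M = g x := max_eq_left h.le
      have hy : g y ≤ m := le_trans (le_min h.le le_rfl) (le_max_left _ _)
      rw [max_eq_left (hMx ▸ hcM).le, max_eq_right (hy.trans hcm.le)]
      exact ne_of_gt (hMx ▸ hcM)

theorem stmt_14 {K : Type*} [TopologicalSpace K] [CompactSpace K] [T2Space K]
    (p : K) (A : Set C(K, ℝ))
    (hadd : ∀ f ∈ A, ∀ g ∈ A, f + g ∈ A)
    (hsmul : ∀ (c : ℝ), ∀ f ∈ A, c • f ∈ A)
    (hsup : ∀ f ∈ A, ∀ g ∈ A, f ⊔ g ∈ A)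
    (hinf : ∀ f ∈ A, ∀ g ∈ A, f ⊓ g ∈ A)
    (hconst : ∀ c : ℝ, ContinuousMap.const K c ∈ A)
    (hsep : ∀ x y : K, x ≠ y → ∃ f ∈ A, f x ≠ f y) :
    ∀ x y : K, x ≠ y →
      ∃ a ∈ A, (∃ U ∈ nhds p, ∀ z ∈ U, a z = a p) ∧ a x ≠ a y := by
  intro x y hxy
  obtain ⟨f, hf, hfxy⟩ := hsep x y hxy
  set g : C(K, ℝ) := f + (-(f p)) • ContinuousMap.const K 1 with hgdef
  have hgA : g ∈ A := hadd f hf _ (hsmul _ _ (hconst 1))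
  have hgp : g p = 0 := by simp [hgdef]
  have hgx : g x = f x - f p := by simp [hgdef]; ring
  have hgy : g y = f y - f p := by simp [hgdef]; ring
  have hgne : g x ≠ g y := by
    rw [hgx, hgy]; intro h; exact hfxy (by linarith)
  rcases lt_or_ge 0 (max (g x) (g y)) with hpos | hnp
  · exact stmt_14_aux p x y A hsup hconst g hgA hgp hgne hpos
  · set h : C(K, ℝ) := (-1 : ℝ) • g with hhdef
    have hhA : h ∈ A := hsmul _ _ hgA
    have hhx : h x = -(g x) := by simp [hhdef]
    have hhy : h y = -(g y) := by simp [hhdef]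
    have hhp : h p = 0 := by simp [hhdef, hgp]
    have hhne : h x ≠ h y := by rw [hhx, hhy]; exact fun hh => hgne (by linarith)
    have hmin : min (g x) (g y) < 0 :=
      lt_of_lt_of_le (min_lt_max.mpr hgne) hnp
    have hpos' : 0 < max (h x) (h y) := by
      rw [hhx, hhy, max_neg_neg]  -- max (-a) (-b) = -min a b
      linarith
    exact stmt_14_aux p x y A hsup hconst h hhA hhp hhne hpos'
end

section
/- Let E be a compact Hausdorff extremally disconnected space containing a dense set D of isolated points. Then E is homeomorphic to the Čech–Stone compactification βD of the discrete space D; equivalently, every bounded continuous real-valued function on D extends continuously to E. -/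
open Set Function Topology

section StoneCech

variable {α X : Type*} [TopologicalSpace α] [TopologicalSpace X] [CompactSpace X] [T2Space X]

lemma stoneCechExtend_mem_closure_image {g : α → X} (hg : Continuous g)
    {W : Set (StoneCech α)} (hW : IsOpen W) {z : StoneCech α} (hz : z ∈ W) :
    stoneCechExtend hg z ∈ closure (g '' (stoneCechUnit ⁻¹' W)) := by
  have hz' : z ∈ closure (stoneCechUnit '' (stoneCechUnit ⁻¹' W)) := by
    rw [image_preimage_eq_inter_range]
    exact denseRange_stoneCechUnit.open_subset_closure_inter hW hz
  have := map_mem_closure (continuous_stoneCechExtend hg) hz' (mapsTo_image _ _)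
  rwa [← image_comp, stoneCechExtend_extends hg] at this

lemma surjective_stoneCechExtend {g : α → X} (hg : Continuous g) (hd : DenseRange g) :
    Surjective (stoneCechExtend hg) := by
  have hrange : range g ⊆ range (stoneCechExtend hg) :=
    range_subset_iff.mpr fun a => ⟨_, stoneCechExtend_stoneCechUnit hg a⟩
  rw [← range_eq_univ, ← (isCompact_range (continuous_stoneCechExtend hg)).isClosed.closure_eq]
  exact (hd.mono hrange).closure_eq

/-- Disjoint open sets of `βα` meet `α` in disjoint sets, whose images under `g` are open and
disjoint, hence have disjoint closures in the extremally disconnected space `X`. -/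
lemma injective_stoneCechExtend [DiscreteTopology α] [ExtremallyDisconnected X] {g : α → X}
    (hg : IsOpenEmbedding g) : Injective (stoneCechExtend hg.continuous) := by
  intro x y hxy
  by_contra hne
  obtain ⟨U, V, hU, hV, hxU, hyV, hUV⟩ := t2_separation hne
  have hdisj : Disjoint (closure (g '' (stoneCechUnit ⁻¹' U)))
      (closure (g '' (stoneCechUnit ⁻¹' V))) :=
    ExtremallyDisconnected.disjoint_closure_of_disjoint_isOpen
      ((disjoint_image_iff hg.injective).mpr (hUV.preimage _))
      (hg.isOpenMap _ (isOpen_discrete _)) (hg.isOpenMap _ (isOpen_discrete _))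
  exact hdisj.ne_of_mem (stoneCechExtend_mem_closure_image _ hU hxU)
    (stoneCechExtend_mem_closure_image _ hV hyV) hxy

lemma isHomeomorph_stoneCechExtend [DiscreteTopology α] [ExtremallyDisconnected X] {g : α → X}
    (hg : IsOpenEmbedding g) (hd : DenseRange g) : IsHomeomorph (stoneCechExtend hg.continuous) :=
  isHomeomorph_iff_continuous_bijective.mpr ⟨continuous_stoneCechExtend _,
    injective_stoneCechExtend hg, surjective_stoneCechExtend _ hd⟩

lemma exists_stoneCech_extension {Y : Type*} [TopologicalSpace Y] [T2Space Y] (f : C(α, Y))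
    {K : Set Y} (hK : IsCompact K) (hfK : ∀ a, f a ∈ K) :
    ∃ g : C(StoneCech α, Y), ∀ a, g (stoneCechUnit a) = f a := by
  have : CompactSpace K := isCompact_iff_compactSpace.mp hK
  have hf : Continuous (codRestrict f K hfK) := f.continuous.codRestrict hfK
  exact ⟨⟨_, continuous_subtype_val.comp (continuous_stoneCechExtend hf)⟩,
    fun a => congrArg Subtype.val (stoneCechExtend_stoneCechUnit hf a)⟩

end StoneCech

theorem stmt_15 {E : Type*} [TopologicalSpace E] [CompactSpace E] [T2Space E]
    [ExtremallyDisconnected E]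
    (D : Set E) (hiso : ∀ d ∈ D, IsOpen ({d} : Set E)) (hdense : Dense D) :
    (∃ h : StoneCech ↥D ≃ₜ E, ∀ d : ↥D, h (stoneCechUnit d) = (d : E)) ∧
    (∀ f : C(↥D, ℝ), (∃ M : ℝ, ∀ x : ↥D, |f x| ≤ M) →
      ∃ g : C(E, ℝ), ∀ x : ↥D, g x = f x) := by
  have : DiscreteTopology D :=
    discreteTopology_subtype_iff'.mpr fun d hd => ⟨{d}, hiso d hd, singleton_inter_of_mem hd⟩
  have hD : IsOpen D := isOpen_iff_forall_mem_open.mpr fun d hd => ⟨{d}, by simpa, hiso d hd, rfl⟩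
  have hι := hD.isOpenEmbedding_subtypeVal
  let h := (isHomeomorph_stoneCechExtend hι hdense.denseRange_val).homeomorph
  have hh : ∀ d : D, h (stoneCechUnit d) = d := stoneCechExtend_stoneCechUnit hι.continuous
  refine ⟨⟨h, hh⟩, fun f ⟨M, hM⟩ => ?_⟩
  obtain ⟨g, hg⟩ := exists_stoneCech_extension f (isCompact_closedBall (0 : ℝ) M)
    fun x => by simpa using hM x
  exact ⟨g.comp h.symm, fun d => by simp [← hh d, hg]⟩
end

section
/- The one-point compactification αD of an uncountable discrete space D is an almost-P space: it has no proper dense cozero-set. -/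
theorem stmt_17 {D : Type*} [TopologicalSpace D] [DiscreteTopology D]
    [Uncountable D] :
    ∀ f : C(OnePoint D, ℝ), Dense {x | f x ≠ 0} → {x | f x ≠ 0} = Set.univ := by
  intro f hd
  have hcoe : ∀ d : D, f d ≠ 0 := by
    intro d
    have hopen : IsOpen ({(d : OnePoint D)} : Set (OnePoint D)) := by
      have : ({(d : OnePoint D)} : Set (OnePoint D)) = (↑) '' {d} := by simp
      rw [this]
      exact OnePoint.isOpenEmbedding_coe.isOpenMap _ (isOpen_discrete _)
    obtain ⟨x, hx1, hx2⟩ := hd.inter_open_nonempty _ hopen (Set.singleton_nonempty _)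
    rw [Set.mem_singleton_iff] at hx1
    rwa [hx1] at hx2
  have hinf : f OnePoint.infty ≠ 0 := by
    by_contra h0
    have hfin : ∀ n : ℕ, Set.Finite {d : D | (1:ℝ)/(n+1) ≤ |f d|} := by
      intro n
      have hV : IsOpen {x : OnePoint D | |f x| < 1/(n+1)} :=
        isOpen_lt f.continuous.abs continuous_const
      have hmem : (OnePoint.infty : OnePoint D) ∈ {x : OnePoint D | |f x| < 1/(n+1)} := by
        simp only [Set.mem_setOf_eq, h0, abs_zero]
        positivity
      rw [OnePoint.isOpen_iff_of_mem hmem] at hV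
      have hcpt := hV.2
      have heq : ((↑) ⁻¹' {x : OnePoint D | |f x| < 1/(n+1)} : Set D)ᶜ
          = {d : D | (1:ℝ)/(n+1) ≤ |f d|} := by
        ext d; simp [not_lt]
      rw [heq] at hcpt
      exact hcpt.finite_of_discrete
    have hcnt : (Set.univ : Set D).Countable := by
      have hsub : (Set.univ : Set D) ⊆ ⋃ n : ℕ, {d : D | (1:ℝ)/(n+1) ≤ |f d|} := by
        intro d _
        have hpos : (0:ℝ) < |f d| := abs_pos.mpr (hcoe d)
        obtain ⟨n, hn⟩ := exists_nat_one_div_lt hpos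
        exact Set.mem_iUnion.mpr ⟨n, le_of_lt hn⟩
      exact Set.Countable.mono hsub (Set.countable_iUnion fun n => (hfin n).countable)
    exact Set.not_countable_univ hcnt
  ext x
  simp only [Set.mem_univ, iff_true, Set.mem_setOf_eq]
  cases x using OnePoint.rec with
  | infty => exact hinf
  | coe d => exact hcoe d
end

section
/- Let X and Y be compact Hausdorff spaces and τ : Y → X a continuous irreducible surjection. If Y is an almost-P space (has no proper dense cozero-set), then X is an almost-P space. -/
open Set

def IsAlmostP (X : Type*) [TopologicalSpace X] : Prop :=
  ∀ f : C(X, ℝ), Dense {x | f x ≠ 0} → {x | f x ≠ 0} = univ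

section

variable {X Y : Type*} [TopologicalSpace X] [TopologicalSpace Y]

/-- The closure of `τ ⁻¹' s` maps onto the closed set containing the dense set `s`, so it is
everything by irreducibility. -/
theorem Dense.preimage_of_irreducible {τ : Y → X} (hclosed : IsClosedMap τ)
    (hsurj : Function.Surjective τ)
    (hirr : ∀ F : Set Y, IsClosed F → F ≠ univ → τ '' F ≠ univ)
    {s : Set X} (hs : Dense s) : Dense (τ ⁻¹' s) := by
  by_contra hnd
  refine hirr _ isClosed_closure (mt dense_iff_closure_eq.2 hnd) (eq_univ_of_univ_subset ?_)
  have hsub : s ⊆ τ '' closure (τ ⁻¹' s) :=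
    (image_preimage_eq s hsurj).symm.subset.trans (image_mono subset_closure)
  rw [← hs.closure_eq]
  exact (hclosed _ isClosed_closure).closure_subset_iff.2 hsub

theorem IsAlmostP.of_surjective {τ : Y → X} (hcont : Continuous τ)
    (hsurj : Function.Surjective τ) (hdense : ∀ s : Set X, Dense s → Dense (τ ⁻¹' s))
    (hY : IsAlmostP Y) : IsAlmostP X := by
  intro f hf
  have hpre : τ ⁻¹' {x | f x ≠ 0} = univ := hY (f.comp ⟨τ, hcont⟩) (hdense _ hf)
  rwa [preimage_eq_univ_iff, hsurj.range_eq, univ_subset_iff] at hpre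

end

theorem stmt_18_general {X Y : Type*} [TopologicalSpace X] [TopologicalSpace Y]
    [T2Space X] [CompactSpace Y]
    (τ : Y → X) (hcont : Continuous τ) (hsurj : Function.Surjective τ)
    (hirr : ∀ F : Set Y, IsClosed F → F ≠ Set.univ → τ '' F ≠ Set.univ)
    (hY : ∀ f : C(Y, ℝ), Dense {y | f y ≠ 0} → {y | f y ≠ 0} = Set.univ) :
    ∀ f : C(X, ℝ), Dense {x | f x ≠ 0} → {x | f x ≠ 0} = Set.univ :=
  IsAlmostP.of_surjective hcont hsurj
    (fun _ hs => hs.preimage_of_irreducible hcont.isClosedMap hsurj hirr) hY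

theorem stmt_18 {X Y : Type*} [TopologicalSpace X] [TopologicalSpace Y]
    [CompactSpace X] [T2Space X] [CompactSpace Y] [T2Space Y]
    (τ : Y → X) (hcont : Continuous τ) (hsurj : Function.Surjective τ)
    (hirr : ∀ F : Set Y, IsClosed F → F ≠ Set.univ → τ '' F ≠ Set.univ)
    (hY : ∀ f : C(Y, ℝ), Dense {y | f y ≠ 0} → {y | f y ≠ 0} = Set.univ) :
    ∀ f : C(X, ℝ), Dense {x | f x ≠ 0} → {x | f x ≠ 0} = Set.univ :=
  stmt_18_general τ hcont hsurj hirr hY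
end
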